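/- arXiv:math/0502095 — 3 statements merged into one kernel-verified Lean document; each statement's English description precedes it below -/
import Mathlib

section
/- Let C be a coalgebra over a field k and let X and Y be right invariant linear endomorphisms of C. Then ε_C ∘ (X ∘ Y) = (ε_C ∘ Y) * (ε_C ∘ X), where * denotes the convolution product on the dual space C* = Hom_k(C, k); moreover ε_C ∘ id = ε_C. In other words, the map sending a right invariant operator X to the linear form ε_C ∘ X is an anti-morphism of algebras from right invariant operators (under composition) to the convolution algebra C*. -/
open TensorProduct

namespace Coalgebra

variable {R C : Type*} [CommSemiring R] [AddCommMonoid C] [Module R C] [Coalgebra R C]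

theorem mul'_comp_map_counit_comp_comul (φ : C →ₗ[R] R) :
    LinearMap.mul' R R ∘ₗ map counit φ ∘ₗ comul = φ := by
  rw [← LinearMap.lTensor_comp_rTensor, LinearMap.comp_assoc, rTensor_counit_comp_comul]
  ext c
  simp

theorem mul'_comp_map_counit_comp_comp_comul_of_rightInvariant {Y : C →ₗ[R] C}
    (hY : comul ∘ₗ Y = map Y LinearMap.id ∘ₗ comul) (φ : C →ₗ[R] R) :
    LinearMap.mul' R R ∘ₗ map (counit ∘ₗ Y) φ ∘ₗ comul = φ ∘ₗ Y := calc
  _ = LinearMap.mul' R R ∘ₗ map counit φ ∘ₗ map Y LinearMap.id ∘ₗ comul := by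
    rw [← LinearMap.rTensor_def, ← LinearMap.comp_assoc comul (LinearMap.rTensor C Y),
      LinearMap.map_comp_rTensor]
  _ = (LinearMap.mul' R R ∘ₗ map counit φ ∘ₗ comul) ∘ₗ Y := by
    rw [← hY]; rfl
  _ = φ ∘ₗ Y := by rw [mul'_comp_map_counit_comp_comul]

end Coalgebra

theorem counit_comp_rightInvariant_antihom_general
    (k C : Type*) [Field k] [AddCommGroup C] [Module k C] [Coalgebra k C]
    (X Y : C →ₗ[k] C)
    (hY : Coalgebra.comul ∘ₗ Y = TensorProduct.map Y LinearMap.id ∘ₗ Coalgebra.comul) :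
    (Coalgebra.counit ∘ₗ (X ∘ₗ Y) : C →ₗ[k] k) =
      LinearMap.mul' k k ∘ₗ
        TensorProduct.map (Coalgebra.counit ∘ₗ Y) (Coalgebra.counit ∘ₗ X) ∘ₗ Coalgebra.comul ∧
    (Coalgebra.counit ∘ₗ (LinearMap.id : C →ₗ[k] C) : C →ₗ[k] k) = Coalgebra.counit := by
  refine ⟨?_, LinearMap.comp_id _⟩
  rw [Coalgebra.mul'_comp_map_counit_comp_comp_comul_of_rightInvariant hY, LinearMap.comp_assoc]

/-- For right invariant endomorphisms `X`, `Y` of a coalgebra `C`,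
`ε ∘ (X ∘ Y) = (ε ∘ Y) * (ε ∘ X)` (convolution), and `ε ∘ id = ε`. -/
theorem counit_comp_rightInvariant_antihom
    (k C : Type*) [Field k] [AddCommGroup C] [Module k C] [Coalgebra k C]
    (X Y : C →ₗ[k] C)
    (hX : Coalgebra.comul ∘ₗ X = TensorProduct.map X LinearMap.id ∘ₗ Coalgebra.comul)
    (hY : Coalgebra.comul ∘ₗ Y = TensorProduct.map Y LinearMap.id ∘ₗ Coalgebra.comul) :
    (Coalgebra.counit ∘ₗ (X ∘ₗ Y) : C →ₗ[k] k) =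
      LinearMap.mul' k k ∘ₗ
        TensorProduct.map (Coalgebra.counit ∘ₗ Y) (Coalgebra.counit ∘ₗ X) ∘ₗ Coalgebra.comul ∧
    (Coalgebra.counit ∘ₗ (LinearMap.id : C →ₗ[k] C) : C →ₗ[k] k) = Coalgebra.counit :=
  counit_comp_rightInvariant_antihom_general k C X Y hY
end

section
/- Let L and F be finite-dimensional coalgebras over a field k and let x : L → End(F) be a linear map whose values are right invariant operators on F. Then there exists a unique linear map X : L → End(T(F)) such that for all l ∈ L: (1) X(l)(1) = ε_L(l)·1; (2) X(l)(ι(f)) = ι(x(l)(f)) for all f ∈ F; (3) X(l)(w₁·w₂) = Σ_k X(l'_k)(w₁)·X(l''_k)(w₂) for all w₁, w₂ ∈ T(F), where Δ_L(l) = Σ_k l'_k ⊗ l''_k. -/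
open TensorProduct Coalgebra

section Conv
variable {k C A : Type*} [CommSemiring k] [AddCommMonoid C] [Module k C] [Coalgebra k C]
  [Semiring A] [Algebra k A]

noncomputable instance instOneConv : One (C →ₗ[k] A) :=
  ⟨Algebra.linearMap k A ∘ₗ Coalgebra.counit⟩

noncomputable instance instMulConv : Mul (C →ₗ[k] A) :=
  ⟨fun f g => LinearMap.mul' k A ∘ₗ TensorProduct.map f g ∘ₗ Coalgebra.comul⟩

lemma conv_one_apply (c : C) : (1 : C →ₗ[k] A) c = algebraMap k A (Coalgebra.counit c) := rfl

lemma conv_mul_apply (f g : C →ₗ[k] A) (c : C) :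
    (f * g) c = LinearMap.mul' k A (TensorProduct.map f g (Coalgebra.comul c)) := rfl

lemma conv_repr (f g : C →ₗ[k] A) {c : C} {ι : Type*} (repr : Coalgebra.Repr k c ι) :
    (f * g) c = ∑ i ∈ repr.index, f (repr.left i) * g (repr.right i) := by
  rw [conv_mul_apply, ← repr.eq, map_sum, map_sum]
  simp [TensorProduct.map_tmul]

lemma conv_one_mul (f : C →ₗ[k] A) : 1 * f = f := by
  ext c
  have h := congrArg (TensorProduct.lid k A)
    (Coalgebra.sum_counit_tmul_map_eq f c (repr := ℛ k c))
  simp only [map_sum, TensorProduct.lid_tmul, one_smul] at h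
  rw [conv_repr 1 f (ℛ k c)]
  simp only [conv_one_apply, ← Algebra.smul_def]
  exact h

lemma conv_mul_one (f : C →ₗ[k] A) : f * 1 = f := by
  ext c
  have h := congrArg (TensorProduct.rid k A)
    (Coalgebra.sum_map_tmul_counit_eq f c (repr := ℛ k c))
  simp only [map_sum, TensorProduct.rid_tmul, one_smul] at h
  rw [conv_repr f 1 (ℛ k c)]
  simp only [conv_one_apply]
  rw [← h]
  exact Finset.sum_congr rfl fun i _ => by rw [← Algebra.commutes, ← Algebra.smul_def]

lemma conv_mul_assoc (f g h : C →ₗ[k] A) : f * g * h = f * (g * h) := by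
  ext c
  set repr := ℛ k c
  set a₁ : (i : C × C) → Coalgebra.Repr k (repr.left i) (C × C) := fun i => ℛ k (repr.left i) with ha₁
  set a₂ : (i : C × C) → Coalgebra.Repr k (repr.right i) (C × C) := fun i => ℛ k (repr.right i) with ha₂
  have key := congrArg (LinearMap.mul' k A ∘ₗ LinearMap.lTensor A (LinearMap.mul' k A))
    (Coalgebra.sum_map_tmul_tmul_eq f g h c (repr := repr) (a₁ := a₁) (a₂ := a₂))
  simp only [map_sum, LinearMap.comp_apply, LinearMap.lTensor_tmul, LinearMap.mul'_apply] at key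
  rw [conv_repr (f * g) h repr, conv_repr f (g * h) repr]
  calc ∑ i ∈ repr.index, (f * g) (repr.left i) * h (repr.right i)
      = ∑ i ∈ repr.index, ∑ j ∈ (a₁ i).index,
        f ((a₁ i).left j) * (g ((a₁ i).right j) * h (repr.right i)) := by
        refine Finset.sum_congr rfl fun i _ => ?_
        rw [conv_repr f g (a₁ i), Finset.sum_mul]
        exact Finset.sum_congr rfl fun j _ => mul_assoc _ _ _
    _ = ∑ i ∈ repr.index, f (repr.left i) * (g * h) (repr.right i) := by
        rw [← key]
        refine Finset.sum_congr rfl fun i _ => ?_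
        rw [conv_repr g h (a₂ i), Finset.mul_sum]

noncomputable instance instSemiringConv : Semiring (C →ₗ[k] A) :=
  { (inferInstance : AddCommMonoid (C →ₗ[k] A)) with
    mul := (· * ·)
    one := 1
    mul_assoc := conv_mul_assoc
    one_mul := conv_one_mul
    mul_one := conv_mul_one
    left_distrib := fun f g h => by
      ext c
      rw [conv_repr f (g + h) (ℛ k c)]
      simp [conv_repr f g (ℛ k c), conv_repr f h (ℛ k c), mul_add, Finset.sum_add_distrib]
    right_distrib := fun f g h => by
      ext c
      rw [conv_repr (f + g) h (ℛ k c)]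
      simp [conv_repr f h (ℛ k c), conv_repr g h (ℛ k c), add_mul, Finset.sum_add_distrib]
    zero_mul := fun f => by
      ext c; rw [conv_repr 0 f (ℛ k c)]; simp
    mul_zero := fun f => by
      ext c; rw [conv_repr f 0 (ℛ k c)]; simp }

noncomputable instance instAlgebraConv : Algebra k (C →ₗ[k] A) :=
  Algebra.ofModule
    (fun r f g => by
      ext c
      rw [conv_repr (r • f) g (ℛ k c), LinearMap.smul_apply, conv_repr f g (ℛ k c)]
      simp [Finset.smul_sum, smul_mul_assoc])
    (fun r f g => by
      ext c
      rw [conv_repr f (r • g) (ℛ k c), LinearMap.smul_apply, conv_repr f g (ℛ k c)]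
      simp [Finset.smul_sum, mul_smul_comm])

end Conv

/-- Given finite-dimensional coalgebras `L`, `F` and a linear map
`x : L → End(F)` with right invariant values, there is a unique linear map
`X : L → End(T(F))` with `X(l)(1) = ε_L(l)·1`, `X(l)(ι f) = ι(x(l)(f))` and
`X(l)(w₁·w₂) = Σ X(l')(w₁)·X(l'')(w₂)` for `Δ_L(l) = Σ l' ⊗ l''`. -/
theorem exists_unique_extension
    (k L F : Type*) [Field k]
    [AddCommGroup L] [Module k L] [Coalgebra k L] [FiniteDimensional k L]
    [AddCommGroup F] [Module k F] [Coalgebra k F] [FiniteDimensional k F]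
    (x : L →ₗ[k] Module.End k F)
    (hx : ∀ l : L, Coalgebra.comul ∘ₗ (x l : F →ₗ[k] F) =
      TensorProduct.map (x l) LinearMap.id ∘ₗ Coalgebra.comul) :
    ∃! X : L →ₗ[k] Module.End k (TensorAlgebra k F),
      (∀ l : L, X l 1 = Coalgebra.counit (R := k) l • (1 : TensorAlgebra k F)) ∧
      (∀ (l : L) (f : F), X l (TensorAlgebra.ι k f) = TensorAlgebra.ι k (x l f)) ∧
      (∀ (l : L) (w₁ w₂ : TensorAlgebra k F), X l (w₁ * w₂) =
        LinearMap.mul' k (TensorAlgebra k F)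
          (TensorProduct.map (LinearMap.applyₗ w₁ ∘ₗ X) (LinearMap.applyₗ w₂ ∘ₗ X)
            (Coalgebra.comul (R := k) l))) := by
  classical
  set ρ : F →ₗ[k] (L →ₗ[k] TensorAlgebra k F) :=
    ((LinearMap.llcomp k F F (TensorAlgebra k F) (TensorAlgebra.ι k)) ∘ₗ x).flip with hρ
  set φ : TensorAlgebra k F →ₐ[k] (L →ₗ[k] TensorAlgebra k F) := TensorAlgebra.lift k ρ with hφ
  set X₀ : L →ₗ[k] Module.End k (TensorAlgebra k F) := φ.toLinearMap.flip with hX₀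
  have hX : ∀ w : TensorAlgebra k F, LinearMap.applyₗ w ∘ₗ X₀ = φ w :=
    fun w => LinearMap.ext fun l => rfl
  have e1 : ∀ l : L, X₀ l 1 = Coalgebra.counit (R := k) l • (1 : TensorAlgebra k F) := by
    intro l
    show φ 1 l = _
    rw [map_one, conv_one_apply, Algebra.algebraMap_eq_smul_one]
  have e2 : ∀ (l : L) (f : F), X₀ l (TensorAlgebra.ι k f) = TensorAlgebra.ι k (x l f) := by
    intro l f
    show φ (TensorAlgebra.ι k f) l = _
    rw [TensorAlgebra.lift_ι_apply]
    rfl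
  have e3 : ∀ (l : L) (w₁ w₂ : TensorAlgebra k F), X₀ l (w₁ * w₂) =
      LinearMap.mul' k (TensorAlgebra k F)
        (TensorProduct.map (LinearMap.applyₗ w₁ ∘ₗ X₀) (LinearMap.applyₗ w₂ ∘ₗ X₀)
          (Coalgebra.comul (R := k) l)) := by
    intro l w₁ w₂
    rw [hX, hX]
    show φ (w₁ * w₂) l = _
    rw [map_mul, conv_mul_apply]
  refine ⟨X₀, ⟨e1, e2, e3⟩, ?_⟩
  rintro X' ⟨h1, h2, h3⟩
  have key : ∀ w : TensorAlgebra k F, ∀ l : L, X' l w = X₀ l w := by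
    intro w
    induction w using TensorAlgebra.induction with
    | algebraMap r =>
      intro l
      rw [Algebra.algebraMap_eq_smul_one, map_smul, map_smul, h1, e1]
    | ι f =>
      intro l
      rw [h2, e2]
    | mul w₁ w₂ ih₁ ih₂ =>
      intro l
      have c₁ : LinearMap.applyₗ w₁ ∘ₗ X' = LinearMap.applyₗ w₁ ∘ₗ X₀ := LinearMap.ext ih₁
      have c₂ : LinearMap.applyₗ w₂ ∘ₗ X' = LinearMap.applyₗ w₂ ∘ₗ X₀ := LinearMap.ext ih₂
      rw [h3, c₁, c₂, ← e3]
    | add a b iha ihb =>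
      intro l
      rw [map_add, map_add, iha l, ihb l]
  exact LinearMap.ext fun l => LinearMap.ext fun w => key w l
end

section
/- Let L and F be finite-dimensional coalgebras over a field k, let x : L → End(F) be a linear map whose values are right invariant operators on F, and let X : L → End(T(F)) be the associated extension. Then for every l ∈ L the operator X(l) is right invariant on T(F) for the comultiplication Δ_{T(F)}: Δ_{T(F)} ∘ X(l) = (X(l) ⊗ id) ∘ Δ_{T(F)}. -/
open TensorProduct

/-- The unique algebra homomorphism `Δ_{T(F)} : T(F) → T(F) ⊗ T(F)` with
`Δ_{T(F)}(ι f) = (ι ⊗ ι)(Δ_F f)`. -/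
noncomputable def comulTensorAlgebra (k F : Type*) [Field k] [AddCommGroup F] [Module k F]
    [Coalgebra k F] :
    TensorAlgebra k F →ₐ[k] TensorAlgebra k F ⊗[k] TensorAlgebra k F :=
  TensorAlgebra.lift k
    (TensorProduct.map (TensorAlgebra.ι k) (TensorAlgebra.ι k) ∘ₗ Coalgebra.comul)

set_option maxHeartbeats 1000000 in
set_option synthInstance.maxHeartbeats 200000 in
/-- the extension `X : L → End(T(F))` of a right-invariant-valued
`x : L → End(F)` takes values in right invariant operators on `T(F)`. -/
theorem extension_rightInvariant
    (k L F : Type*) [Field k]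
    [AddCommGroup L] [Module k L] [Coalgebra k L] [FiniteDimensional k L]
    [AddCommGroup F] [Module k F] [Coalgebra k F] [FiniteDimensional k F]
    (x : L →ₗ[k] Module.End k F)
    (hx : ∀ l : L, Coalgebra.comul ∘ₗ (x l : F →ₗ[k] F) =
      TensorProduct.map (x l) LinearMap.id ∘ₗ Coalgebra.comul)
    (X : L →ₗ[k] Module.End k (TensorAlgebra k F))
    (hX1 : ∀ l : L, X l 1 = Coalgebra.counit (R := k) l • (1 : TensorAlgebra k F))
    (hX2 : ∀ (l : L) (f : F), X l (TensorAlgebra.ι k f) = TensorAlgebra.ι k (x l f))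
    (hX3 : ∀ (l : L) (w₁ w₂ : TensorAlgebra k F), X l (w₁ * w₂) =
      LinearMap.mul' k (TensorAlgebra k F)
        (TensorProduct.map (LinearMap.applyₗ w₁ ∘ₗ X) (LinearMap.applyₗ w₂ ∘ₗ X)
          (Coalgebra.comul (R := k) l))) :
    ∀ l : L,
      (comulTensorAlgebra k F).toLinearMap ∘ₗ (X l : TensorAlgebra k F →ₗ[k] TensorAlgebra k F) =
        TensorProduct.map (X l) LinearMap.id ∘ₗ (comulTensorAlgebra k F).toLinearMap := by
  classical
  set D : TensorAlgebra k F →ₗ[k] TensorAlgebra k F ⊗[k] TensorAlgebra k F :=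
    (comulTensorAlgebra k F).toLinearMap with hD
  set Y : L →ₗ[k] Module.End k (TensorAlgebra k F ⊗[k] TensorAlgebra k F) :=
    ((TensorProduct.mapBilinear (RingHom.id k) (TensorAlgebra k F) (TensorAlgebra k F)
      (TensorAlgebra k F) (TensorAlgebra k F)).flip LinearMap.id).comp X with hYdef
  have hY : ∀ l : L, Y l = TensorProduct.map (X l) LinearMap.id := by
    intro l
    simp [hYdef, TensorProduct.mapBilinear_apply]
  -- key multiplicativity lemma on T ⊗ T
  have key : ∀ (l : L) (t s : TensorAlgebra k F ⊗[k] TensorAlgebra k F), Y l (t * s) =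
      LinearMap.mul' k (TensorAlgebra k F ⊗[k] TensorAlgebra k F)
        (TensorProduct.map (LinearMap.applyₗ t ∘ₗ Y) (LinearMap.applyₗ s ∘ₗ Y)
          (Coalgebra.comul (R := k) l)) := by
    intro l t s
    induction t using TensorProduct.induction_on with
    | zero =>
        simp only [zero_mul, map_zero, LinearMap.zero_comp,
          TensorProduct.map_zero_left, LinearMap.zero_apply]
    | add t t' ht ht' =>
        simp only [add_mul, map_add, LinearMap.add_comp, TensorProduct.map_add_left,
          LinearMap.add_apply, ht, ht']
    | tmul a b =>
      induction s using TensorProduct.induction_on with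
      | zero =>
          simp only [mul_zero, map_zero, LinearMap.zero_comp,
            TensorProduct.map_zero_right, LinearMap.zero_apply]
      | add s s' hs hs' =>
          simp only [mul_add, map_add, LinearMap.add_comp, TensorProduct.map_add_right,
            LinearMap.add_apply, hs, hs']
      | tmul c d =>
        have h1 : ∀ u : L ⊗[k] L,
            (LinearMap.mul' k (TensorAlgebra k F)
              (TensorProduct.map (LinearMap.applyₗ a ∘ₗ X) (LinearMap.applyₗ c ∘ₗ X) u))
              ⊗ₜ[k] (b * d) =
            LinearMap.mul' k (TensorAlgebra k F ⊗[k] TensorAlgebra k F)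
              (TensorProduct.map (LinearMap.applyₗ (a ⊗ₜ[k] b) ∘ₗ Y)
                (LinearMap.applyₗ (c ⊗ₜ[k] d) ∘ₗ Y) u) := by
          intro u
          induction u using TensorProduct.induction_on with
          | zero => simp only [map_zero, zero_tmul]
          | add u u' hu hu' => simp only [map_add, add_tmul, hu, hu']
          | tmul l₁ l₂ =>
            simp only [TensorProduct.map_tmul, LinearMap.comp_apply,
              LinearMap.applyₗ_apply_apply, LinearMap.mul'_apply, hY,
              Algebra.TensorProduct.tmul_mul_tmul, LinearMap.id_coe, id_eq]
        calc Y l ((a ⊗ₜ[k] b) * (c ⊗ₜ[k] d))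
            = (X l (a * c)) ⊗ₜ[k] (b * d) := by
              rw [Algebra.TensorProduct.tmul_mul_tmul, hY]
              simp only [TensorProduct.map_tmul, LinearMap.id_coe, id_eq]
          _ = _ := by rw [hX3 l a c]; exact h1 _
  -- D turns mul' on T into mul' on T ⊗ T
  have hDmul : ∀ u : TensorAlgebra k F ⊗[k] TensorAlgebra k F,
      D (LinearMap.mul' k (TensorAlgebra k F) u)
        = LinearMap.mul' k (TensorAlgebra k F ⊗[k] TensorAlgebra k F)
            (TensorProduct.map D D u) := by
    intro u
    induction u using TensorProduct.induction_on with
    | zero => simp only [map_zero]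
    | add u u' hu hu' => simp only [map_add, hu, hu']
    | tmul p q =>
        rw [LinearMap.mul'_apply, TensorProduct.map_tmul, LinearMap.mul'_apply]
        exact map_mul (comulTensorAlgebra k F) p q
  have hDι : ∀ g : F, D ((TensorAlgebra.ι k) g)
      = TensorProduct.map (TensorAlgebra.ι k) (TensorAlgebra.ι k)
          (Coalgebra.comul (R := k) g) := by
    intro g
    rw [hD]
    show (comulTensorAlgebra k F) ((TensorAlgebra.ι k) g) = _
    rw [comulTensorAlgebra, TensorAlgebra.lift_ι_apply, LinearMap.comp_apply]
  have main : ∀ w : TensorAlgebra k F, ∀ l : L, D (X l w) = Y l (D w) := by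
    intro w
    induction w using TensorAlgebra.induction with
    | algebraMap r =>
        intro l
        have h1 : (algebraMap k (TensorAlgebra k F)) r = r • (1 : TensorAlgebra k F) :=
          Algebra.algebraMap_eq_smul_one r
        have hD1 : D (1 : TensorAlgebra k F) = 1 := map_one (comulTensorAlgebra k F)
        have hD1' : D (1 : TensorAlgebra k F) = (1 : TensorAlgebra k F) ⊗ₜ[k] 1 := by
          rw [hD1, Algebra.TensorProduct.one_def]
        simp only [h1, map_smul, hX1, hD1', hY, TensorProduct.map_tmul,
          LinearMap.id_coe, id_eq, TensorProduct.smul_tmul', smul_smul]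
    | ι f =>
        intro l
        have hxf : Coalgebra.comul (R := k) ((x l) f)
            = TensorProduct.map (x l) LinearMap.id (Coalgebra.comul (R := k) f) := by
          simpa using LinearMap.congr_fun (hx l) f
        have h3 : TensorProduct.map (TensorAlgebra.ι k (M := F)) (TensorAlgebra.ι k (M := F)) ∘ₗ
              TensorProduct.map (x l) (LinearMap.id (M := F))
            = TensorProduct.map ((X l : TensorAlgebra k F →ₗ[k] TensorAlgebra k F))
                (LinearMap.id (M := TensorAlgebra k F)) ∘ₗ
              TensorProduct.map (TensorAlgebra.ι k (M := F)) (TensorAlgebra.ι k (M := F)) := by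
          rw [← TensorProduct.map_comp, ← TensorProduct.map_comp]
          congr 1
          ext g
          simp [hX2]
        rw [hX2, hDι, hDι, hxf, hY]
        exact LinearMap.congr_fun h3 (Coalgebra.comul (R := k) f)
    | mul w₁ w₂ ih₁ ih₂ =>
        intro l
        have hA : D ∘ₗ (LinearMap.applyₗ (M := TensorAlgebra k F) w₁ ∘ₗ X)
            = LinearMap.applyₗ (M := TensorAlgebra k F ⊗[k] TensorAlgebra k F) (D w₁) ∘ₗ Y := by
          ext l₁; simpa using ih₁ l₁
        have hB : D ∘ₗ (LinearMap.applyₗ (M := TensorAlgebra k F) w₂ ∘ₗ X)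
            = LinearMap.applyₗ (M := TensorAlgebra k F ⊗[k] TensorAlgebra k F) (D w₂) ∘ₗ Y := by
          ext l₁; simpa using ih₂ l₁
        have hDprod : D (w₁ * w₂) = D w₁ * D w₂ := map_mul (comulTensorAlgebra k F) w₁ w₂
        have h2 : TensorProduct.map D D
              (TensorProduct.map (LinearMap.applyₗ (M := TensorAlgebra k F) w₁ ∘ₗ X)
                (LinearMap.applyₗ (M := TensorAlgebra k F) w₂ ∘ₗ X)
                (Coalgebra.comul (R := k) l))
            = TensorProduct.map
                (LinearMap.applyₗ (M := TensorAlgebra k F ⊗[k] TensorAlgebra k F) (D w₁) ∘ₗ Y)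
                (LinearMap.applyₗ (M := TensorAlgebra k F ⊗[k] TensorAlgebra k F) (D w₂) ∘ₗ Y)
                (Coalgebra.comul (R := k) l) := by
          conv_lhs => rw [← LinearMap.comp_apply, ← TensorProduct.map_comp]
          rw [hA, hB]
        rw [hX3 l w₁ w₂, hDmul, h2, hDprod, key l (D w₁) (D w₂)]
    | add w₁ w₂ ih₁ ih₂ =>
        intro l
        simp only [map_add, ih₁ l, ih₂ l]
  intro l
  ext w
  simp only [LinearMap.comp_apply]
  rw [← hY l]
  exact main w l
end
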